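/- arXiv:1405.7950 — 2 statements merged into one kernel-verified Lean document; each statement's English description precedes it below -/
import Mathlib

section
/- Let α, β, γ be integers with β odd and let r ≥ 1. Then 2^{-r} ∑_{x₁=0}^{2^r-1} ∑_{x₂=0}^{2^r-1} e^{2πi (α x₁² + β x₁ x₂ + γ x₂²)/2^r} = (-1)^{αγr}. -/
/-!
Write `S r` for the double sum. For `r ≥ 2`, shifting `x₁` by `2^(r-1)` multiplies each term by
`(-1)^(β x₂) = (-1)^x₂`, and likewise with the roles of `x₁`, `x₂` exchanged. Averaging over the
four shifts kills every term with an odd coordinate, and the terms with both coordinates even give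
`S (r - 2)` four times over. So `S (r + 2) = 4 S r`, and the theorem reduces to `S 0 = 1` and
`S 1 = 1 + (-1)^α + (-1)^γ - (-1)^(α + γ) = 2 (-1)^(αγ)`.
-/

open Finset

noncomputable def dyadicExp (r : ℕ) (n : ℤ) : ℂ :=
  Complex.exp (2 * Real.pi * Complex.I * n / 2 ^ r)

def binaryQuadForm (α β γ a b : ℤ) : ℤ :=
  α * a ^ 2 + β * a * b + γ * b ^ 2

noncomputable def quadGaussSum (α β γ : ℤ) (r : ℕ) : ℂ :=
  ∑ x₁ ∈ range (2 ^ r), ∑ x₂ ∈ range (2 ^ r), dyadicExp r (binaryQuadForm α β γ x₁ x₂)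

section Parity

variable {R : Type*} [DivisionRing R]

lemma neg_one_zpow_eq_of_even_sub {m n : ℤ} (h : Even (m - n)) :
    (-1 : R) ^ m = (-1 : R) ^ n := by
  rw [← sub_add_cancel m n, zpow_add₀ (by norm_num), h.neg_one_zpow, one_mul]

lemma neg_one_zpow_odd_mul {β : ℤ} (hβ : Odd β) (n : ℤ) :
    (-1 : R) ^ (β * n) = (-1 : R) ^ n := by
  obtain ⟨c, rfl⟩ := hβ
  exact neg_one_zpow_eq_of_even_sub ⟨c * n, by ring⟩

lemma neg_one_zpow_two_pow_succ_add (k : ℕ) (n : ℤ) :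
    (-1 : R) ^ (2 ^ (k + 1) + n) = (-1 : R) ^ n :=
  neg_one_zpow_eq_of_even_sub ⟨2 ^ k, by ring⟩

end Parity

lemma dyadicExp_add (r : ℕ) (a b : ℤ) : dyadicExp r (a + b) = dyadicExp r a * dyadicExp r b := by
  simp only [dyadicExp, ← Complex.exp_add]
  congr 1
  push_cast
  ring

lemma dyadicExp_two_pow_mul (r : ℕ) (m : ℤ) : dyadicExp r (2 ^ r * m) = 1 := by
  rw [dyadicExp, ← Complex.exp_int_mul_two_pi_mul_I m]
  congr 1
  push_cast
  field_simp

lemma dyadicExp_succ_two_pow_mul (k : ℕ) (m : ℤ) :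
    dyadicExp (k + 1) (2 ^ k * m) = (-1 : ℂ) ^ m := by
  rw [dyadicExp, ← Complex.exp_pi_mul_I, ← Complex.exp_int_mul]
  congr 1
  push_cast [pow_succ]
  field_simp

lemma dyadicExp_one (n : ℤ) : dyadicExp 1 n = (-1 : ℂ) ^ n := by
  simpa using dyadicExp_succ_two_pow_mul 0 n

lemma dyadicExp_add_two_four_mul (k : ℕ) (n : ℤ) : dyadicExp (k + 2) (4 * n) = dyadicExp k n := by
  simp only [dyadicExp]
  congr 1
  push_cast [pow_succ]
  field_simp
  ring

section QuadForm

lemma binaryQuadForm_two_mul (α β γ a b : ℤ) :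
    binaryQuadForm α β γ (2 * a) (2 * b) = 4 * binaryQuadForm α β γ a b := by
  unfold binaryQuadForm
  ring

variable {α β γ : ℤ}

lemma dyadicExp_binaryQuadForm_add_left (hβ : Odd β) (k : ℕ) (a b : ℤ) :
    dyadicExp (k + 2) (binaryQuadForm α β γ (2 ^ (k + 1) + a) b)
      = (-1 : ℂ) ^ b * dyadicExp (k + 2) (binaryQuadForm α β γ a b) := by
  have h : binaryQuadForm α β γ (2 ^ (k + 1) + a) b
      = 2 ^ (k + 2) * (α * a + α * 2 ^ k) + (2 ^ (k + 1) * (β * b) + binaryQuadForm α β γ a b) := by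
    unfold binaryQuadForm
    ring
  rw [h, dyadicExp_add, dyadicExp_add, dyadicExp_two_pow_mul, dyadicExp_succ_two_pow_mul,
    neg_one_zpow_odd_mul hβ, one_mul]

lemma dyadicExp_binaryQuadForm_add_right (hβ : Odd β) (k : ℕ) (a b : ℤ) :
    dyadicExp (k + 2) (binaryQuadForm α β γ a (2 ^ (k + 1) + b))
      = (-1 : ℂ) ^ a * dyadicExp (k + 2) (binaryQuadForm α β γ a b) := by
  have h : binaryQuadForm α β γ a (2 ^ (k + 1) + b)
      = 2 ^ (k + 2) * (γ * b + γ * 2 ^ k) + (2 ^ (k + 1) * (β * a) + binaryQuadForm α β γ a b) := by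
    unfold binaryQuadForm
    ring
  rw [h, dyadicExp_add, dyadicExp_add, dyadicExp_two_pow_mul, dyadicExp_succ_two_pow_mul,
    neg_one_zpow_odd_mul hβ, one_mul]

end QuadForm

section Sums

variable {M : Type*} [AddCommMonoid M]

lemma sum_range_add_self_sum_range_add_self (h : ℕ) (f : ℕ → ℕ → M) :
    ∑ x₁ ∈ range (h + h), ∑ x₂ ∈ range (h + h), f x₁ x₂
      = ∑ u₁ ∈ range h, ∑ u₂ ∈ range h,
          (f u₁ u₂ + f (h + u₁) u₂ + (f u₁ (h + u₂) + f (h + u₁) (h + u₂))) := by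
  simp only [sum_range_add, sum_add_distrib]

lemma sum_range_two_mul_one_add_neg_one_pow_mul {R : Type*} [CommRing R] (m : ℕ) (g : ℕ → R) :
    ∑ u ∈ range (2 * m), (1 + (-1 : R) ^ u) * g u = 2 * ∑ v ∈ range m, g (2 * v) := by
  induction m with
  | zero => simp
  | succ m ih =>
    rw [mul_add_one, sum_range_succ, sum_range_succ, ih, sum_range_succ, pow_succ, pow_mul,
      neg_one_sq, one_pow]
    ring

end Sums

section GaussSum

variable {α β γ : ℤ}

lemma quadGaussSum_add_two_eq_sum_parity (hβ : Odd β) (k : ℕ) :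
    quadGaussSum α β γ (k + 2) = ∑ u₁ ∈ range (2 ^ (k + 1)), ∑ u₂ ∈ range (2 ^ (k + 1)),
      (1 + (-1 : ℂ) ^ u₁) * ((1 + (-1 : ℂ) ^ u₂) *
        dyadicExp (k + 2) (binaryQuadForm α β γ u₁ u₂)) := by
  rw [quadGaussSum, show 2 ^ (k + 2) = 2 ^ (k + 1) + 2 ^ (k + 1) by ring,
    sum_range_add_self_sum_range_add_self]
  refine sum_congr rfl fun u₁ _ => sum_congr rfl fun u₂ _ => ?_
  push_cast
  simp only [dyadicExp_binaryQuadForm_add_left hβ, dyadicExp_binaryQuadForm_add_right hβ,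
    neg_one_zpow_two_pow_succ_add, zpow_natCast]
  ring

lemma quadGaussSum_add_two (hβ : Odd β) (k : ℕ) :
    quadGaussSum α β γ (k + 2) = 4 * quadGaussSum α β γ k := by
  rw [quadGaussSum_add_two_eq_sum_parity hβ, pow_succ, mul_comm _ 2]
  simp only [← mul_sum, sum_range_two_mul_one_add_neg_one_pow_mul]
  push_cast
  simp only [binaryQuadForm_two_mul, dyadicExp_add_two_four_mul, quadGaussSum]
  ring

lemma quadGaussSum_zero : quadGaussSum α β γ 0 = 1 := by
  simp [quadGaussSum, binaryQuadForm, dyadicExp]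

lemma quadGaussSum_one (hβ : Odd β) : quadGaussSum α β γ 1 = 2 * (-1 : ℂ) ^ (α * γ) := by
  have h : (-1 : ℂ) ^ (α + β + γ) = -((-1 : ℂ) ^ α * (-1 : ℂ) ^ γ) := by
    rw [zpow_add₀ (by norm_num), zpow_add₀ (by norm_num), hβ.neg_one_zpow]
    ring
  have hS : quadGaussSum α β γ 1
      = 1 + (-1 : ℂ) ^ γ + ((-1 : ℂ) ^ α + (-1 : ℂ) ^ (α + β + γ)) := by
    simp [quadGaussSum, binaryQuadForm, dyadicExp_one, sum_range_succ]
  rw [hS, h]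
  rcases Int.even_or_odd α with hα | hα
  · rw [hα.neg_one_zpow, (hα.mul_right γ).neg_one_zpow]
    ring
  · rw [hα.neg_one_zpow, zpow_mul, hα.neg_one_zpow]
    ring

theorem quadGaussSum_eq (hβ : Odd β) (r : ℕ) :
    quadGaussSum α β γ r = 2 ^ r * (-1 : ℂ) ^ (α * γ * r) := by
  induction r using Nat.twoStepInduction with
  | zero => simpa using quadGaussSum_zero
  | one => simpa using quadGaussSum_one hβ
  | more k ih _ =>
    rw [quadGaussSum_add_two hβ, ih, ← neg_one_zpow_eq_of_even_sub (m := α * γ * (k + 2 : ℕ))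
      ⟨α * γ, by push_cast; ring⟩]
    ring

end GaussSum

theorem stmt7_general (α β γ : ℤ) (hβ : Odd β) (r : ℕ) :
    ((2 : ℂ) ^ r)⁻¹ *
        ∑ x₁ ∈ Finset.range (2 ^ r), ∑ x₂ ∈ Finset.range (2 ^ r),
          Complex.exp (2 * Real.pi * Complex.I *
            ((α : ℂ) * (x₁ : ℂ) ^ 2 + (β : ℂ) * x₁ * x₂ + (γ : ℂ) * (x₂ : ℂ) ^ 2) / 2 ^ r)
      = (-1 : ℂ) ^ (α * γ * (r : ℤ)) := by
  have hsum : ∑ x₁ ∈ Finset.range (2 ^ r), ∑ x₂ ∈ Finset.range (2 ^ r),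
      Complex.exp (2 * Real.pi * Complex.I *
        ((α : ℂ) * (x₁ : ℂ) ^ 2 + (β : ℂ) * x₁ * x₂ + (γ : ℂ) * (x₂ : ℂ) ^ 2) / 2 ^ r)
      = quadGaussSum α β γ r := by
    simp only [quadGaussSum, dyadicExp, binaryQuadForm]
    push_cast
    rfl
  rw [hsum, quadGaussSum_eq hβ, inv_mul_cancel_left₀ (by simp)]

theorem stmt7 (α β γ : ℤ) (hβ : Odd β) (r : ℕ) (hr : 1 ≤ r) :
    ((2 : ℂ) ^ r)⁻¹ *
        ∑ x₁ ∈ Finset.range (2 ^ r), ∑ x₂ ∈ Finset.range (2 ^ r),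
          Complex.exp (2 * Real.pi * Complex.I *
            ((α : ℂ) * (x₁ : ℂ) ^ 2 + (β : ℂ) * x₁ * x₂ + (γ : ℂ) * (x₂ : ℂ) ^ 2) / 2 ^ r)
      = (-1 : ℂ) ^ (α * γ * (r : ℤ)) :=
  stmt7_general α β γ hβ r
end

section
/- Let (G,q) be a finite abelian group with quadratic form q such that ∂q is non-degenerate. Suppose there exists a ∈ G with ka = 0 and k·q(a) ≠ 0 in ℚ/ℤ. Then Θ(F_k(G), F_k(q)) = 0, where F_k(G) = {(x₁,…,x_k) ∈ G^k : ∑xᵢ = 0}, F_k(q)(x) = ∑ q(xᵢ), and Θ is the normalized Gauss sum. -/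
/-!
Translating every coordinate by `a` permutes `F_k(G)` because `k • a = 0`. Modulo `ℤ`, the
polar form `u ↦ q (u + a) - q u - q a` is additive, so its sum over a tuple with zero sum is
an integer; hence the translation multiplies each term of the Gauss sum by the same root of
unity `exp (2πi k q(a)) ≠ 1`, and the sum must vanish.
-/

open Classical

open Complex

lemma AddChar.map_sum_eq_prod {ι A M : Type*} [AddCommMonoid A] [CommMonoid M]
    (ψ : AddChar A M) (s : Finset ι) (f : ι → A) :
    ψ (∑ i ∈ s, f i) = ∏ i ∈ s, ψ (f i) :=
  map_prod ψ.toMonoidHom (fun i => Multiplicative.ofAdd (f i)) s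

lemma Finset.sum_eq_zero_of_add_eq_mul {M R : Type*} [AddGroup M] [CommRing R] [IsDomain R]
    (s : Finset M) (t : M) (hs : ∀ x, x + t ∈ s ↔ x ∈ s) (f : M → R) {c : R} (hc : c ≠ 1)
    (hf : ∀ x ∈ s, f (x + t) = c * f x) : ∑ x ∈ s, f x = 0 := by
  have hinv : c * ∑ x ∈ s, f x = ∑ x ∈ s, f x :=
    calc c * ∑ x ∈ s, f x = ∑ x ∈ s, f (x + t) := by
          rw [Finset.mul_sum]; exact Finset.sum_congr rfl fun x hx => (hf x hx).symm
      _ = ∑ x ∈ s, f x := Finset.sum_equiv (Equiv.addRight t) (fun x => (hs x).symm)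
          fun _ _ => rfl
  by_contra h
  exact hc ((mul_eq_right₀ h).1 hinv)

lemma Finset.sum_add_const_eq_zero_iff {ι G : Type*} [Fintype ι] [AddCommGroup G] {a : G}
    (ha : Fintype.card ι • a = 0) (x : ι → G) :
    ∑ i, (x i + a) = 0 ↔ ∑ i, x i = 0 := by
  rw [Finset.sum_add_distrib, Finset.sum_const, Finset.card_univ, ha, add_zero]

namespace Rat

noncomputable def expChar : AddChar ℚ ℂ where
  toFun r := exp (2 * Real.pi * I * r)
  map_zero_eq_one' := by simp
  map_add_eq_mul' r s := by push_cast; rw [← Complex.exp_add]; ring_nf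

lemma expChar_apply (r : ℚ) : expChar r = exp (2 * Real.pi * I * r) := rfl

lemma expChar_eq_one_iff (r : ℚ) : expChar r = 1 ↔ ∃ n : ℤ, r = n := by
  have h2πI : (2 * Real.pi * I : ℂ) ≠ 0 := by simp [Real.pi_ne_zero]
  rw [expChar_apply, Complex.exp_eq_one_iff]
  refine exists_congr fun n => ?_
  rw [mul_comm (n : ℂ), mul_right_inj' h2πI]
  exact_mod_cast Iff.rfl

lemma expChar_intCast (n : ℤ) : expChar n = 1 :=
  (expChar_eq_one_iff _).2 ⟨n, rfl⟩

lemma expChar_add_intCast (r : ℚ) (n : ℤ) : expChar (r + n) = expChar r := by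
  rw [AddChar.map_add_eq_mul, expChar_intCast, mul_one]

end Rat

open Rat

section PolarCharacter

variable {G : Type*} [AddCommGroup G]

def PolarAddLeftModInt (q : G → ℚ) : Prop :=
  ∀ x y z : G, ∃ n : ℤ,
    (q (x + z + y) - q (x + z) - q y) = (q (x + y) - q x - q y) + (q (z + y) - q z - q y) + n

variable {q : G → ℚ} (hq : PolarAddLeftModInt q)
include hq

noncomputable def polarChar (a : G) : AddChar G ℂ where
  toFun u := expChar (q (u + a) - q u - q a)
  map_zero_eq_one' := by
    obtain ⟨n, hn⟩ := hq 0 0 0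
    have hq0 : q (0 + a) - q 0 - q a = ((-n : ℤ) : ℚ) := by
      simp only [add_zero, zero_add] at hn ⊢; push_cast; linarith
    rw [hq0, expChar_intCast]
  map_add_eq_mul' u v := by
    obtain ⟨n, hn⟩ := hq u a v
    rw [hn, expChar_add_intCast, AddChar.map_add_eq_mul]

lemma polarChar_apply (a u : G) : polarChar hq a u = expChar (q (u + a) - q u - q a) := rfl

lemma expChar_sum_add_const {ι : Type*} [Fintype ι] (a : G) (x : ι → G) (hx : ∑ i, x i = 0) :
    expChar (∑ i, q (x i + a)) = expChar (Fintype.card ι * q a) * expChar (∑ i, q (x i)) := by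
  set χ := polarChar hq a
  have hsplit : ∀ i, expChar (q (x i + a)) = χ (x i) * expChar (q (x i)) * expChar (q a) := by
    intro i
    rw [polarChar_apply, ← AddChar.map_add_eq_mul, ← AddChar.map_add_eq_mul]
    exact congrArg expChar (by ring)
  calc expChar (∑ i, q (x i + a))
      = ∏ i, χ (x i) * expChar (q (x i)) * expChar (q a) := by
        rw [AddChar.map_sum_eq_prod]; exact Finset.prod_congr rfl fun i _ => hsplit i
    _ = χ (∑ i, x i) * expChar (∑ i, q (x i)) * expChar (q a) ^ Fintype.card ι := by
        rw [Finset.prod_mul_distrib, Finset.prod_mul_distrib, Finset.prod_const,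
          AddChar.map_sum_eq_prod, AddChar.map_sum_eq_prod, Finset.card_univ]
    _ = expChar (Fintype.card ι * q a) * expChar (∑ i, q (x i)) := by
        rw [hx, AddChar.map_zero_eq_one, one_mul, ← AddChar.map_nsmul_eq_pow, nsmul_eq_mul,
          mul_comm]

end PolarCharacter

theorem stmt14_general {G : Type*} [AddCommGroup G] [Fintype G]
    -- `q` is a rational-valued lift of a `ℚ/ℤ`-valued quadratic form:
    (q : G → ℚ)
    (hq_bilin : ∀ x y z : G, ∃ n : ℤ,
      (q (x + z + y) - q (x + z) - q y)
        = (q (x + y) - q x - q y) + (q (z + y) - q z - q y) + n)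
    (k : ℕ)
    (a : G) (ha : k • a = 0) (hka : ¬ ∃ n : ℤ, (k : ℚ) * q a = n) :
    (Real.sqrt ((Fintype.card G : ℝ) ^ (k - 1)) : ℂ)⁻¹ *
        ∑ x ∈ Finset.univ.filter (fun x : Fin k → G => ∑ i, x i = 0),
          Complex.exp (2 * Real.pi * Complex.I * ((∑ i, q (x i) : ℚ) : ℂ))
      = 0 := by
  have hk : Fintype.card (Fin k) • a = 0 := by rwa [Fintype.card_fin]
  have hc : expChar (k * q a) ≠ 1 := mt (expChar_eq_one_iff _).1 (by simpa [eq_comm] using hka)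
  suffices ∑ x ∈ Finset.univ.filter (fun x : Fin k → G => ∑ i, x i = 0),
      expChar (∑ i, q (x i)) = 0 from mul_eq_zero_of_right _ this
  refine Finset.sum_eq_zero_of_add_eq_mul _ (fun _ => a) ?_ _ hc ?_
  · intro x
    simp only [Finset.mem_filter, Finset.mem_univ, true_and, Pi.add_apply,
      Finset.sum_add_const_eq_zero_iff hk]
  · intro x hx
    simpa using expChar_sum_add_const hq_bilin a x (Finset.mem_filter.1 hx).2

theorem stmt14 {G : Type*} [AddCommGroup G] [Fintype G]
    -- `q` is a rational-valued lift of a `ℚ/ℤ`-valued quadratic form: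
    (q : G → ℚ)
    (hq_even : ∀ x : G, ∃ n : ℤ, q (-x) = q x + n)
    (hq_bilin : ∀ x y z : G, ∃ n : ℤ,
      (q (x + z + y) - q (x + z) - q y)
        = (q (x + y) - q x - q y) + (q (z + y) - q z - q y) + n)
    (hnd : ∀ x : G, (∀ y : G, ∃ n : ℤ, q (x + y) - q x - q y = n) → x = 0)
    (k : ℕ) (hk : 1 ≤ k)
    (a : G) (ha : k • a = 0) (hka : ¬ ∃ n : ℤ, (k : ℚ) * q a = n) :
    (Real.sqrt ((Fintype.card G : ℝ) ^ (k - 1)) : ℂ)⁻¹ *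
        ∑ x ∈ Finset.univ.filter (fun x : Fin k → G => ∑ i, x i = 0),
          Complex.exp (2 * Real.pi * Complex.I * ((∑ i, q (x i) : ℚ) : ℂ))
      = 0 :=
  stmt14_general q hq_bilin k a ha hka
end
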